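/- Let U, Y be real Hilbert spaces, S : U → Y bounded linear, N : U → U bounded linear self-adjoint with ⟨Nu,u⟩ ≥ c₀‖u‖², θ : U → ℝ ∪ {+∞} convex, lower semicontinuous, proper, and fix b ∈ Y. Define the set-valued mapping φ : U × Y ⇉ U × Y by φ(u, p) = (Nu + ∂θ(u) + S*p) × {−Su + p − b}. Then there exists a constant κ₀ > 0 such that for all w₁, w₂ ∈ U × Y and all ζ₁ ∈ φ(w₁), ζ₂ ∈ φ(w₂), one has ‖w₁ − w₂‖ ≤ κ₀‖ζ₁ − ζ₂‖; that is, κ₀ · dist(φ(w₁), φ(w₂)) ≥ ‖w₁ − w₂‖. -/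

import Mathlib

/-!
Write `Δu, Δp, Δξ, Δη` for the differences of the data and `Δg` for the difference of the
two subgradients of `θ`. Then `Δξ = N Δu + S* Δp + Δg` and `S Δu = Δp - Δη`, so testing the
first equation against `Δu` and using the adjoint turns the coupling term into
`‖Δp‖² - ⟪Δp, Δη⟫`. Monotonicity of `∂θ` drops `⟪Δg, Δu⟫ ≥ 0`, and coercivity of `N` gives
`c₀ ‖Δu‖² + ‖Δp‖² ≤ ⟪Δξ, Δu⟫ + ⟪Δp, Δη⟫`; Cauchy–Schwarz then yields the bound with
`κ₀ = 1 / min c₀ 1`.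
-/

open MeasureTheory RealInnerProductSpace

noncomputable section

/-- The convex subdifferential of an extended-real-valued function `θ` at `u`. -/
def subdiff {U : Type*} [NormedAddCommGroup U] [InnerProductSpace ℝ U]
    (θ : U → EReal) (u : U) : Set U :=
  {g | ∀ v : U, θ u + ((⟪g, v - u⟫ : ℝ) : EReal) ≤ θ v}

section Subdifferential

variable {U : Type*} [NormedAddCommGroup U] [InnerProductSpace ℝ U] {θ : U → EReal}

theorem ne_top_of_mem_subdiff {g u : U} (hg : g ∈ subdiff θ u) (hproper : ∃ v, θ v ≠ ⊤) :
    θ u ≠ ⊤ := by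
  obtain ⟨v, hv⟩ := hproper
  intro hu
  have := hg v
  rw [hu, EReal.top_add_of_ne_bot (EReal.coe_ne_bot _)] at this
  exact hv (top_le_iff.mp this)

theorem toReal_add_inner_le_of_mem_subdiff {g u v : U} (hg : g ∈ subdiff θ u)
    (hu_bot : θ u ≠ ⊥) (hu_top : θ u ≠ ⊤) (hv_bot : θ v ≠ ⊥) (hv_top : θ v ≠ ⊤) :
    (θ u).toReal + ⟪g, v - u⟫ ≤ (θ v).toReal := by
  have := hg v
  rw [← EReal.coe_toReal hu_top hu_bot, ← EReal.coe_toReal hv_top hv_bot,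
    ← EReal.coe_add] at this
  exact_mod_cast this

theorem inner_sub_nonneg_of_mem_subdiff (hne_bot : ∀ u, θ u ≠ ⊥) (hproper : ∃ v, θ v ≠ ⊤)
    {g₁ g₂ u₁ u₂ : U} (h₁ : g₁ ∈ subdiff θ u₁) (h₂ : g₂ ∈ subdiff θ u₂) :
    0 ≤ ⟪g₁ - g₂, u₁ - u₂⟫ := by
  have ht₁ := ne_top_of_mem_subdiff h₁ hproper
  have ht₂ := ne_top_of_mem_subdiff h₂ hproper
  have m₁ := toReal_add_inner_le_of_mem_subdiff h₁ (hne_bot _) ht₁ (hne_bot _) ht₂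
  have m₂ := toReal_add_inner_le_of_mem_subdiff h₂ (hne_bot _) ht₂ (hne_bot _) ht₁
  rw [← neg_sub u₁ u₂, inner_neg_right] at m₁
  rw [inner_sub_left]
  linarith

end Subdifferential

theorem sq_mul_add_sq_le_of_mul_le {m x y a e : ℝ} (hm : 0 ≤ m)
    (h : m * (x ^ 2 + y ^ 2) ≤ a * x + e * y) : m ^ 2 * (x ^ 2 + y ^ 2) ≤ a ^ 2 + e ^ 2 := by
  nlinarith [sq_nonneg (m * x - a), sq_nonneg (m * y - e)]

section Hilbert

variable {U Y : Type*} [NormedAddCommGroup U] [InnerProductSpace ℝ U]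
  [NormedAddCommGroup Y] [InnerProductSpace ℝ Y]

theorem sq_norm_add_sq_norm_le_of_coercive {c : ℝ} (hc : 0 < c) {u ξ : U} {p η : Y}
    (h : c * ‖u‖ ^ 2 + ‖p‖ ^ 2 ≤ ⟪ξ, u⟫ + ⟪p, η⟫) :
    ‖u‖ ^ 2 + ‖p‖ ^ 2 ≤ (1 / min c 1) ^ 2 * (‖ξ‖ ^ 2 + ‖η‖ ^ 2) := by
  have hm : 0 < min c 1 := lt_min hc one_pos
  have hmain : min c 1 * (‖u‖ ^ 2 + ‖p‖ ^ 2) ≤ ‖ξ‖ * ‖u‖ + ‖η‖ * ‖p‖ := calc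
    min c 1 * (‖u‖ ^ 2 + ‖p‖ ^ 2) ≤ c * ‖u‖ ^ 2 + ‖p‖ ^ 2 := by
      nlinarith [min_le_left c 1, min_le_right c 1, sq_nonneg ‖u‖, sq_nonneg ‖p‖]
    _ ≤ ⟪ξ, u⟫ + ⟪p, η⟫ := h
    _ ≤ ‖ξ‖ * ‖u‖ + ‖η‖ * ‖p‖ := by
      nlinarith [real_inner_le_norm ξ u, real_inner_le_norm p η]
  rw [div_pow, one_pow, one_div_mul_eq_div, le_div_iff₀ (by positivity), mul_comm]
  exact sq_mul_add_sq_le_of_mul_le hm.le hmain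

variable [CompleteSpace U] [CompleteSpace Y]

theorem coercive_le_inner_add_inner {S : U →L[ℝ] Y} {N : U →L[ℝ] U} {c : ℝ}
    (hcoer : ∀ u : U, c * ‖u‖ ^ 2 ≤ ⟪N u, u⟫) {u g ξ : U} {p η : Y} (hg : 0 ≤ ⟪g, u⟫)
    (hξ : ξ = N u + ContinuousLinearMap.adjoint S p + g) (hη : η = -S u + p) :
    c * ‖u‖ ^ 2 + ‖p‖ ^ 2 ≤ ⟪ξ, u⟫ + ⟪p, η⟫ := by
  have hcoupling : ⟪ContinuousLinearMap.adjoint S p, u⟫ + ⟪p, η⟫ = ‖p‖ ^ 2 := by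
    rw [ContinuousLinearMap.adjoint_inner_left, hη, inner_add_right, inner_neg_right,
      real_inner_self_eq_norm_sq]
    ring
  rw [hξ, inner_add_left, inner_add_left]
  linarith [hcoer u]

end Hilbert

theorem stmt2_general
    {U Y : Type*} [NormedAddCommGroup U] [InnerProductSpace ℝ U] [CompleteSpace U]
    [NormedAddCommGroup Y] [InnerProductSpace ℝ Y] [CompleteSpace Y]
    (S : U →L[ℝ] Y)
    (N : U →L[ℝ] U)
    (c₀ : ℝ) (hc₀ : 0 < c₀) (hcoer : ∀ u : U, c₀ * ‖u‖ ^ 2 ≤ ⟪N u, u⟫)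
    (θ : U → EReal)
    (hne_bot : ∀ u : U, θ u ≠ ⊥) (hproper : ∃ u : U, θ u ≠ ⊤)
    (b : Y) :
    ∃ κ₀ : ℝ, 0 < κ₀ ∧
      ∀ (u₁ u₂ : U) (p₁ p₂ : Y) (ξ₁ ξ₂ : U) (η₁ η₂ : Y),
        (ξ₁ - N u₁ - (ContinuousLinearMap.adjoint S) p₁ ∈ subdiff θ u₁) →
        η₁ = -(S u₁) + p₁ - b →
        (ξ₂ - N u₂ - (ContinuousLinearMap.adjoint S) p₂ ∈ subdiff θ u₂) →
        η₂ = -(S u₂) + p₂ - b →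
        ‖u₁ - u₂‖ ^ 2 + ‖p₁ - p₂‖ ^ 2 ≤ κ₀ ^ 2 * (‖ξ₁ - ξ₂‖ ^ 2 + ‖η₁ - η₂‖ ^ 2) := by
  refine ⟨1 / min c₀ 1, by have := lt_min hc₀ one_pos; positivity, ?_⟩
  intro u₁ u₂ p₁ p₂ ξ₁ ξ₂ η₁ η₂ h₁ hη₁ h₂ hη₂
  have hmono := inner_sub_nonneg_of_mem_subdiff hne_bot hproper h₁ h₂
  refine sq_norm_add_sq_norm_le_of_coercive hc₀
    (coercive_le_inner_add_inner (S := S) hcoer hmono ?_ ?_)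
  · simp only [map_sub]
    abel
  · rw [hη₁, hη₂, map_sub]
    abel

/-- the set-valued optimality mapping
`φ(u, p) = (Nu + ∂θ(u) + S*p) × {−Su + p − b}` on `U × Y` is globally metrically
subregular: there is `κ₀ > 0` such that `‖w₁ − w₂‖ ≤ κ₀ ‖ζ₁ − ζ₂‖` whenever
`ζᵢ ∈ φ(wᵢ)`.  The product norm is the Hilbert norm
`‖(u,p)‖² = ‖u‖² + ‖p‖²`, so the inequality is stated in squared form. -/
theorem stmt2
    {U Y : Type*} [NormedAddCommGroup U] [InnerProductSpace ℝ U] [CompleteSpace U]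
    [NormedAddCommGroup Y] [InnerProductSpace ℝ Y] [CompleteSpace Y]
    (S : U →L[ℝ] Y)
    (N : U →L[ℝ] U) (hNsa : ∀ u v : U, ⟪N u, v⟫ = ⟪u, N v⟫)
    (c₀ : ℝ) (hc₀ : 0 < c₀) (hcoer : ∀ u : U, c₀ * ‖u‖ ^ 2 ≤ ⟪N u, u⟫)
    (θ : U → EReal)
    (hconv : ∀ u v : U, ∀ t : ℝ, 0 ≤ t → t ≤ 1 →
      θ (t • u + (1 - t) • v) ≤ (t : EReal) * θ u + ((1 - t : ℝ) : EReal) * θ v)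
    (hlsc : LowerSemicontinuous θ)
    (hne_bot : ∀ u : U, θ u ≠ ⊥) (hproper : ∃ u : U, θ u ≠ ⊤)
    (b : Y) :
    ∃ κ₀ : ℝ, 0 < κ₀ ∧
      ∀ (u₁ u₂ : U) (p₁ p₂ : Y) (ξ₁ ξ₂ : U) (η₁ η₂ : Y),
        (ξ₁ - N u₁ - (ContinuousLinearMap.adjoint S) p₁ ∈ subdiff θ u₁) →
        η₁ = -(S u₁) + p₁ - b →
        (ξ₂ - N u₂ - (ContinuousLinearMap.adjoint S) p₂ ∈ subdiff θ u₂) →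
        η₂ = -(S u₂) + p₂ - b →
        ‖u₁ - u₂‖ ^ 2 + ‖p₁ - p₂‖ ^ 2 ≤ κ₀ ^ 2 * (‖ξ₁ - ξ₂‖ ^ 2 + ‖η₁ - η₂‖ ^ 2) :=
  stmt2_general S N c₀ hc₀ hcoer θ hne_bot hproper b
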